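/- Suppose the Yang-Baxter algebra relations hold (with XXX structure functions f(λ,μ) = (λ-μ+1)/(λ-μ), g(λ,μ) = 1/(λ-μ)) and the pseudovacuum satisfies A(λ)|0⟩ = α(λ)|0⟩, D(λ)|0⟩ = δ(λ)|0⟩, C(λ)|0⟩ = 0. If distinct parameters λ₁,...,λ_M satisfy the Bethe equations α(λ_i)g(λ,λ_i)∏_{k≠i} f(λ_k,λ_i) + δ(λ_i)g(λ_i,λ)∏_{k≠i} f(λ_i,λ_k) = 0 for all i, then the Bethe vector |λ₁,...,λ_M⟩ = B(λ₁)...B(λ_M)|0⟩ is an eigenvector of the transfer matrix A(λ)+D(λ) with eigenvalue Λ(λ) = α(λ)∏_i f(λ_i,λ) + δ(λ)∏_i f(λ,λ_i). -/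

import Mathlib

noncomputable def fXXX (l m : ℂ) : ℂ := (l - m + 1) / (l - m)

noncomputable def gXXX (l m : ℂ) : ℂ := 1 / (l - m)

/-! Pushing `T(μ)` (`A(μ)` or `D(μ)`) through `B(λ₁)⋯B(λ_M)` with its exchange relation leaves
the wanted term `τ(μ) ∏ F(λᵢ, μ)` times the Bethe vector, plus for each `i` an unwanted term
proportional to the Bethe vector with `λᵢ` replaced by `μ`. By induction on `M` the unwanted
coefficients have a closed form: the two ways in which `B(λ₁)` feeds the unwanted term at `λⱼ`
combine through the identity `F(l,m) G(m,x) + G(m,l) G(l,x) = G(m,x) F(l,x)`, which the XXX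
functions satisfy (in transposed form for `D`). The Bethe equations say exactly that the unwanted
coefficients coming from `A` and from `D` cancel. -/

open Finset Function

namespace Fin

theorem prod_univ_erase_zero {M : Type*} [CommMonoid M] {n : ℕ} (f : Fin (n + 1) → M) :
    ∏ k ∈ univ.erase 0, f k = ∏ k : Fin n, f k.succ := by
  rw [Fin.univ_succ, erase_cons, prod_map]
  rfl

theorem prod_univ_erase_succ {M : Type*} [CommMonoid M] {n : ℕ} (f : Fin (n + 1) → M)
    (j : Fin n) : ∏ k ∈ univ.erase j.succ, f k = f 0 * ∏ k ∈ univ.erase j, f k.succ := by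
  rw [Fin.univ_succ, erase_cons_of_ne _ (succ_ne_zero j).symm, Finset.prod_cons]
  exact congrArg _ (map_erase (succEmb n) univ j ▸ prod_map _ (succEmb n) f :)

end Fin

section BetheAnsatz

variable {ι R V : Type*} [CommSemiring R] [AddCommMonoid V] [Module R V]
  (B : ι → Module.End R V) (v0 : V)

def betheVector {M : ℕ} (lam : Fin M → ι) : V := (List.ofFn fun i => B (lam i)).prod v0

variable {B v0}

@[simp]
theorem betheVector_zero (lam : Fin 0 → ι) : betheVector B v0 lam = v0 := rfl

@[simp]
theorem betheVector_cons {M : ℕ} (l : ι) (lam : Fin M → ι) :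
    betheVector B v0 (Fin.cons l lam) = B l (betheVector B v0 lam) := by
  simp [betheVector, List.ofFn_succ]

theorem apply_betheVector_update_comm (hBB : ∀ l m, B l * B m = B m * B l) {M : ℕ}
    (lam : Fin M → ι) (j : Fin M) (x y : ι) :
    B y (betheVector B v0 (update lam j x)) = B x (betheVector B v0 (update lam j y)) := by
  induction M with
  | zero => exact j.elim0
  | succ M ih =>
    induction lam using Fin.consCases with
    | _ l lam =>
      induction j using Fin.cases with
      | zero =>
        simp only [Fin.update_cons_zero, betheVector_cons, ← Module.End.mul_apply, hBB]
      | succ j =>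
        simp only [← Fin.cons_update, betheVector_cons, ← Module.End.mul_apply, hBB _ l]
        simp only [Module.End.mul_apply, ih]

theorem apply_betheVector_of_exchange {T : ι → Module.End R V} {τ : ι → R} {F G : ι → ι → R}
    (hBB : ∀ l m, B l * B m = B m * B l)
    (hTB : ∀ l m, l ≠ m → T m * B l = F l m • (B l * T m) + G m l • (B m * T l))
    (hT0 : ∀ l, T l v0 = τ l • v0)
    (hFG : ∀ l m x, l ≠ m → m ≠ x → l ≠ x → F l m * G m x + G m l * G l x = G m x * F l x)
    {M : ℕ} (lam : Fin M → ι) (hlam : Injective lam) (μ : ι) (hμ : ∀ i, lam i ≠ μ) :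
    T μ (betheVector B v0 lam) = (τ μ * ∏ i, F (lam i) μ) • betheVector B v0 lam
      + ∑ i, (τ (lam i) * G μ (lam i) * ∏ k ∈ univ.erase i, F (lam k) (lam i)) •
          betheVector B v0 (update lam i μ) := by
  induction M generalizing μ with
  | zero => simp [hT0]
  | succ M ih =>
    induction lam using Fin.consCases with
    | _ l lam =>
      have hlμ : l ≠ μ := by simpa using hμ 0
      have hlamμ : ∀ i, lam i ≠ μ := by simpa using fun i : Fin M => hμ i.succ
      have hlaml : ∀ i, lam i ≠ l := fun i h => Fin.succ_ne_zero i (hlam (by simpa using h))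
      have hinj : Injective lam := fun i j h => Fin.succ_injective _ (hlam (by simpa using h))
      have hexch : T μ (B l (betheVector B v0 lam)) = F l μ • B l (T μ (betheVector B v0 lam))
          + G μ l • B μ (T l (betheVector B v0 lam)) := by
        rw [← Module.End.mul_apply, hTB l μ hlμ]
        rfl
      have hcoeff : ∀ j (c : R), F l μ * (τ (lam j) * G μ (lam j) * c)
          + G μ l * (τ (lam j) * G l (lam j) * c)
          = τ (lam j) * G μ (lam j) * (F l (lam j) * c) := by
        intro j c
        calc _ = (F l μ * G μ (lam j) + G μ l * G l (lam j)) * (τ (lam j) * c) := by ring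
          _ = _ := by rw [hFG l μ (lam j) hlμ (hlamμ j).symm (hlaml j).symm]; ring
      rw [betheVector_cons, hexch, ih lam hinj μ hlamμ, ih lam hinj l hlaml]
      simp only [Fin.prod_univ_succ, Fin.sum_univ_succ, Fin.cons_zero, Fin.cons_succ,
        Fin.update_cons_zero, ← Fin.cons_update, betheVector_cons, Fin.prod_univ_erase_zero,
        Fin.prod_univ_erase_succ, map_add, map_smul, map_sum, smul_add, smul_sum, smul_smul,
        apply_betheVector_update_comm hBB lam _ l μ]
      rw [add_add_add_comm, ← sum_add_distrib]
      simp only [← add_smul, hcoeff]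
      module

end BetheAnsatz

theorem fXXX_gXXX_consistency {l m x : ℂ} (hlm : l ≠ m) (hmx : m ≠ x) (hlx : l ≠ x) :
    fXXX l m * gXXX m x + gXXX m l * gXXX l x = gXXX m x * fXXX l x := by
  have := sub_ne_zero.2 hlm; have := sub_ne_zero.2 hmx; have := sub_ne_zero.2 hlx
  unfold fXXX gXXX
  field_simp
  ring

theorem fXXX_gXXX_consistency_swap {l m x : ℂ} (hlm : l ≠ m) (hmx : m ≠ x) (hlx : l ≠ x) :
    fXXX m l * gXXX x m + gXXX l m * gXXX x l = gXXX x m * fXXX x l := by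
  have := sub_ne_zero.2 hlm.symm; have := sub_ne_zero.2 hmx.symm; have := sub_ne_zero.2 hlx.symm
  unfold fXXX gXXX
  field_simp
  ring

theorem bethe_vector_eigen_general {V : Type*} [AddCommGroup V] [Module ℂ V]
    (A B D : ℂ → Module.End ℂ V) (α δ : ℂ → ℂ) (v0 : V)
    (hBB : ∀ l m : ℂ, B l * B m = B m * B l)
    (hAB : ∀ l m : ℂ, l ≠ m →
      A m * B l = fXXX l m • (B l * A m) + gXXX m l • (B m * A l))
    (hDB : ∀ l m : ℂ, l ≠ m →
      D m * B l = fXXX m l • (B l * D m) + gXXX l m • (B m * D l))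
    (hA0 : ∀ l : ℂ, A l v0 = α l • v0)
    (hD0 : ∀ l : ℂ, D l v0 = δ l • v0)
    (M : ℕ) (lam : Fin M → ℂ) (l0 : ℂ)
    (hdist : ∀ i j, i ≠ j → lam i ≠ lam j) (hl0 : ∀ i, lam i ≠ l0)
    (hBethe : ∀ i,
      α (lam i) * gXXX l0 (lam i) * ∏ k ∈ Finset.univ.erase i, fXXX (lam k) (lam i)
        + δ (lam i) * gXXX (lam i) l0 * ∏ k ∈ Finset.univ.erase i, fXXX (lam i) (lam k)
        = 0) :
    (A l0 + D l0) ((List.ofFn fun i => B (lam i)).prod v0)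
      = (α l0 * ∏ i, fXXX (lam i) l0 + δ l0 * ∏ i, fXXX l0 (lam i)) •
          ((List.ofFn fun i => B (lam i)).prod v0) := by
  have hinj : Injective lam := fun i j h => not_imp_not.1 (hdist i j) h
  have hA := apply_betheVector_of_exchange hBB hAB hA0
    (fun _ _ _ => fXXX_gXXX_consistency) lam hinj l0 hl0
  have hD := apply_betheVector_of_exchange (F := fun l m => fXXX m l) (G := fun l m => gXXX m l)
    hBB hDB hD0 (fun _ _ _ => fXXX_gXXX_consistency_swap) lam hinj l0 hl0
  change A l0 (betheVector B v0 lam) + D l0 (betheVector B v0 lam) = _ • betheVector B v0 lam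
  rw [hA, hD, add_add_add_comm, ← sum_add_distrib]
  simp only [← add_smul, hBethe, zero_smul, sum_const_zero, add_zero]

/-- if the Bethe equations hold, the Bethe vector
`B(λ₁)⋯B(λ_M)|0⟩` is an eigenvector of the transfer matrix `A(λ)+D(λ)` with the
stated eigenvalue. -/
theorem bethe_vector_eigen {V : Type*} [AddCommGroup V] [Module ℂ V]
    (A B C D : ℂ → Module.End ℂ V) (α δ : ℂ → ℂ) (v0 : V)
    (hBB : ∀ l m : ℂ, B l * B m = B m * B l)
    (hAB : ∀ l m : ℂ, l ≠ m →
      A m * B l = fXXX l m • (B l * A m) + gXXX m l • (B m * A l))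
    (hDB : ∀ l m : ℂ, l ≠ m →
      D m * B l = fXXX m l • (B l * D m) + gXXX l m • (B m * D l))
    (hA0 : ∀ l : ℂ, A l v0 = α l • v0)
    (hD0 : ∀ l : ℂ, D l v0 = δ l • v0)
    (hC0 : ∀ l : ℂ, C l v0 = 0)
    (M : ℕ) (lam : Fin M → ℂ) (l0 : ℂ)
    (hdist : ∀ i j, i ≠ j → lam i ≠ lam j) (hl0 : ∀ i, lam i ≠ l0)
    (hBethe : ∀ i,
      α (lam i) * gXXX l0 (lam i) * ∏ k ∈ Finset.univ.erase i, fXXX (lam k) (lam i)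
        + δ (lam i) * gXXX (lam i) l0 * ∏ k ∈ Finset.univ.erase i, fXXX (lam i) (lam k)
        = 0) :
    (A l0 + D l0) ((List.ofFn fun i => B (lam i)).prod v0)
      = (α l0 * ∏ i, fXXX (lam i) l0 + δ l0 * ∏ i, fXXX l0 (lam i)) •
          ((List.ofFn fun i => B (lam i)).prod v0) :=
  bethe_vector_eigen_general A B D α δ v0 hBB hAB hDB hA0 hD0 M lam l0 hdist hl0 hBethe
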